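/- arXiv:1410.3774 — 4 statements merged into one kernel-verified Lean document; each statement's English description precedes it below -/
import Mathlib

section
/- If a finite simple graph Γ is realized as the 1-skeleton of a convex polyhedron inscribed in the hyperboloid, then Γ admits a Hamiltonian cycle (geometrically, the equator of the corresponding ideal polyhedron in anti-de Sitter space is such a cycle). -/
/-!
Write `B(u, v) = u₀v₀ + u₁v₁ - u₂v₂`, so that `H = {B(w, w) = 1}`. For two vertices `u ≠ v` the
midpoint lies in `P ∖ V`, hence inside `H`, which says `B(u, v) < 1`. Rotating a vertex slightly
about the `x₂`-axis gives a point `p ∈ H` with `B(p, w) < 1` for every vertex `w`. Projecting `H`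
from `p` along its two families of rulings gives coordinates `(X, Y)` in which
`(X u - X v) (Y u - Y v)` is a positive multiple of `1 - B(u, v)`, so ordering the vertices by `X`
also orders them by `Y`. The hyperbolas `(X - s) (Y - t) = c` of this chart are plane sections of
`H`. The one through two `X`-consecutive vertices has all other vertices outside its two branches,
the one through the `X`-smallest and the `X`-largest vertex has them all between its branches;
either way its plane supports `P` exactly along the segment joining the two vertices. So the
vertices, in `X`-order, form a Hamiltonian cycle of the 1-skeleton.
-/

open Set

noncomputable section

/-- Euclidean 3-space. -/
abbrev E3 : Type := EuclideanSpace ℝ (Fin 3)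

/-- The unit sphere `x₀² + x₁² + x₂² = 1`. -/
def sphereQ : Set E3 := {p | p 0 ^ 2 + p 1 ^ 2 + p 2 ^ 2 = 1}

/-- The open inside of the sphere. -/
def ballB : Set E3 := {p | p 0 ^ 2 + p 1 ^ 2 + p 2 ^ 2 < 1}

/-- The hyperboloid `x₀² + x₁² − x₂² = 1`. -/
def hypQ : Set E3 := {p | p 0 ^ 2 + p 1 ^ 2 - p 2 ^ 2 = 1}

/-- The open inside of the (solid) hyperboloid. -/
def hypR : Set E3 := {p | p 0 ^ 2 + p 1 ^ 2 - p 2 ^ 2 < 1}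

/-- The cylinder `x₀² + x₁² = 1`. -/
def cylQ : Set E3 := {p | p 0 ^ 2 + p 1 ^ 2 = 1}

/-- The open inside of the (solid) cylinder. -/
def cylR : Set E3 := {p | p 0 ^ 2 + p 1 ^ 2 < 1}

/-- The 1-skeleton of the convex polyhedron `P = convexHull ℝ V`: vertices are the points of
`V`, and distinct `u, v` are adjacent iff the segment `[u,v]` is a face of `P`. -/
def oneSkeleton (V : Set E3) : SimpleGraph V where
  Adj u v := u ≠ v ∧ IsExtreme ℝ (convexHull ℝ V) (segment ℝ (u : E3) (v : E3))
  symm := by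
    refine ⟨?_⟩
    rintro u v ⟨huv, h⟩
    refine ⟨huv.symm, ?_⟩
    rwa [segment_symm]
  loopless := by refine ⟨?_⟩; rintro u ⟨h, -⟩; exact h rfl

/-- `V` is the vertex set of a convex polyhedron inscribed in the quadric `Q` with open
inside `R`. -/
def IsInscribedVertexSet (Q R V : Set E3) : Prop :=
  V.Finite ∧ V ⊆ Q ∧ affineSpan ℝ V = ⊤ ∧
    (∀ v ∈ V, v ∈ Set.extremePoints ℝ (convexHull ℝ V)) ∧
    convexHull ℝ V \ V ⊆ R

/-- `Γ` is realized as the 1-skeleton of a convex polyhedron inscribed in the quadric `Q`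
with open inside `R`. -/
def RealizesInscribed (Q R : Set E3) {α : Type*} (Γ : SimpleGraph α) : Prop :=
  ∃ V : Set E3, IsInscribedVertexSet Q R V ∧ Nonempty (Γ ≃g oneSkeleton V)

/-- `Γ` admits a Hamiltonian cycle. -/
def HasHamiltonianCycle {α : Type*} [DecidableEq α] (Γ : SimpleGraph α) : Prop :=
  ∃ (v : α) (p : Γ.Walk v v), p.IsHamiltonianCycle


section Convex

variable {𝕜 E : Type*} [Field 𝕜] [LinearOrder 𝕜] [IsStrictOrderedRing 𝕜] [AddCommGroup E]
  [Module 𝕜 E]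

lemma isExtreme_inter_setOf_eq_of_le {A : Set E} (l : E →ₗ[𝕜] 𝕜) {c : 𝕜}
    (hle : ∀ x ∈ A, l x ≤ c) : IsExtreme 𝕜 A (A ∩ {x | l x = c}) := by
  refine ⟨inter_subset_left, ?_⟩
  rintro x₁ hx₁ x₂ hx₂ x ⟨-, hx⟩ ⟨a, b, ha, hb, hab, rfl⟩
  simp only [mem_ofPred_eq, map_add, map_smul, smul_eq_mul] at hx
  have h₁ := hle x₁ hx₁
  have h₂ := hle x₂ hx₂
  have hsplit : a * (c - l x₁) + b * (c - l x₂) = 0 := by linear_combination c * hab - hx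
  refine ⟨hx₁, le_antisymm h₁ (not_lt.1 fun h => ?_)⟩
  linarith [mul_pos ha (sub_pos.2 h), mul_nonneg hb.le (sub_nonneg.2 h₂)]

lemma convexHull_inter_setOf_eq_subset {s : Set E} (l : E →ₗ[𝕜] 𝕜) {c : 𝕜}
    (hle : ∀ x ∈ s, l x ≤ c) :
    convexHull 𝕜 s ∩ {x | l x = c} ⊆ convexHull 𝕜 (s ∩ {x | l x = c}) := by
  classical
  rintro x ⟨hx, hlx⟩
  rw [convexHull_eq] at hx
  obtain ⟨ι, t, w, z, hw₀, hw₁, hz, rfl⟩ := hx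
  have hterm : ∀ i ∈ t, 0 ≤ w i * (c - l (z i)) :=
    fun i hi => mul_nonneg (hw₀ i hi) (sub_nonneg.2 (hle _ (hz i hi)))
  have hsum : ∑ i ∈ t, w i * (c - l (z i)) = 0 := by
    rw [mem_ofPred_eq, Finset.centerMass_eq_of_sum_1 _ _ hw₁, map_sum] at hlx
    simp only [map_smul, smul_eq_mul] at hlx
    simp only [mul_sub, Finset.sum_sub_distrib, ← Finset.sum_mul, hw₁, hlx, one_mul, sub_self]
  have hzero := (Finset.sum_eq_zero_iff_of_nonneg hterm).1 hsum
  rw [← Finset.centerMass_filter_ne_zero]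
  refine Finset.centerMass_mem_convexHull _ (fun i hi => hw₀ i (Finset.mem_filter.1 hi).1) ?_ ?_
  · rw [Finset.sum_filter_ne_zero, hw₁]
    exact one_pos
  · intro i hi
    obtain ⟨hit, hwi⟩ := Finset.mem_filter.1 hi
    refine ⟨hz i hit, ?_⟩
    exact (sub_eq_zero.1 ((mul_eq_zero.1 (hzero i hit)).resolve_left hwi)).symm

lemma isExtreme_segment_of_lt {s : Set E} (l : E →ₗ[𝕜] 𝕜) {c : 𝕜} {u v : E} (hu : u ∈ s)
    (hv : v ∈ s) (hlu : l u = c) (hlv : l v = c) (hlt : ∀ w ∈ s, w ≠ u → w ≠ v → l w < c) :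
    IsExtreme 𝕜 (convexHull 𝕜 s) (segment 𝕜 u v) := by
  have hle : ∀ x ∈ s, l x ≤ c := fun w hw => by
    rcases eq_or_ne w u with rfl | hwu
    · exact hlu.le
    rcases eq_or_ne w v with rfl | hwv
    · exact hlv.le
    exact (hlt w hw hwu hwv).le
  have hface := isExtreme_inter_setOf_eq_of_le l (A := convexHull 𝕜 s) (c := c)
    (fun x hx => convexHull_min hle (convex_halfSpace_le l.isLinear c) hx)
  convert hface using 1
  rw [← convexHull_pair]
  refine (convexHull_min ?_ ((convex_convexHull 𝕜 s).inter (convex_hyperplane l.isLinear c)))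
    |>.antisymm ((convexHull_inter_setOf_eq_subset l hle).trans (convexHull_mono ?_))
  · rintro w (rfl | rfl)
    exacts [⟨subset_convexHull 𝕜 s hu, hlu⟩, ⟨subset_convexHull 𝕜 s hv, hlv⟩]
  · rintro w ⟨hw, hlw⟩
    by_contra! h
    simp only [mem_insert_iff, mem_singleton_iff, not_or] at h
    exact (hlt w hw h.1 h.2).ne hlw

end Convex

def lorentz : E3 →ₗ[ℝ] E3 →ₗ[ℝ] ℝ :=
  LinearMap.mk₂ ℝ (fun u v => u 0 * v 0 + u 1 * v 1 - u 2 * v 2)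
    (fun _ _ _ => by simp only [PiLp.add_apply]; ring)
    (fun _ _ _ => by simp only [PiLp.smul_apply, smul_eq_mul]; ring)
    (fun _ _ _ => by simp only [PiLp.add_apply]; ring)
    (fun _ _ _ => by simp only [PiLp.smul_apply, smul_eq_mul]; ring)

lemma lorentz_apply (u v : E3) : lorentz u v = u 0 * v 0 + u 1 * v 1 - u 2 * v 2 := rfl

lemma lorentz_self_of_mem_hypQ {u : E3} (hu : u ∈ hypQ) : lorentz u u = 1 := by
  rw [lorentz_apply, ← hu.out]; ring

/-- For `p ∈ hypQ`, `ruling₁ p` and `ruling₂ p` are `lorentz`-null and `lorentz`-orthogonal to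
`p`: they direct the two rulings of `hypQ` through `p`. -/
def ruling₁ (p : E3) : E3 := !₂[p 1 - p 2 * p 0, -(p 2 * p 1) - p 0, -(1 + p 2 ^ 2)]

def ruling₂ (p : E3) : E3 := !₂[p 2 * p 0 + p 1, p 2 * p 1 - p 0, 1 + p 2 ^ 2]

lemma lorentz_ruling_mul_add {p : E3} (hp : p ∈ hypQ) (u v : E3) :
    lorentz (ruling₁ p) u * lorentz (ruling₂ p) v + lorentz (ruling₁ p) v * lorentz (ruling₂ p) u
      = 2 * (1 + p 2 ^ 2) * (lorentz u v - lorentz p u * lorentz p v) := by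
  simp only [ruling₁, ruling₂, lorentz_apply, Matrix.cons_val_zero, Matrix.cons_val_one,
    Matrix.cons_val]
  linear_combination (2 * (u 0 * v 0 + u 1 * v 1)) * hp.out

/-- On `hypQ`, `chartX p` is constant along the rulings of the family of `p + ℝ • ruling₂ p` and
`chartY p` along those of the other family; the denominator vanishes on `hypQ` exactly on the two
rulings through `p`. -/
def chartX (p w : E3) : ℝ := lorentz (ruling₁ p) w / (1 - lorentz p w)

def chartY (p w : E3) : ℝ := lorentz (ruling₂ p) w / (1 - lorentz p w)

lemma chartX_sub_mul_chartY_sub {p u v : E3} (hp : p ∈ hypQ) (hu : u ∈ hypQ) (hv : v ∈ hypQ)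
    (hpu : lorentz p u ≠ 1) (hpv : lorentz p v ≠ 1) :
    (chartX p u - chartX p v) * (chartY p u - chartY p v)
      = 2 * (1 + p 2 ^ 2) * (1 - lorentz u v) / ((1 - lorentz p u) * (1 - lorentz p v)) := by
  have hu' : 1 - lorentz p u ≠ 0 := sub_ne_zero.2 hpu.symm
  have hv' : 1 - lorentz p v ≠ 0 := sub_ne_zero.2 hpv.symm
  have huu := lorentz_ruling_mul_add hp u u
  have hvv := lorentz_ruling_mul_add hp v v
  have huv := lorentz_ruling_mul_add hp u v
  rw [lorentz_self_of_mem_hypQ hu] at huu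
  rw [lorentz_self_of_mem_hypQ hv] at hvv
  rw [chartX, chartY, chartX, chartY, eq_div_iff (mul_ne_zero hu' hv')]
  field_simp
  linear_combination (1 - lorentz p v) ^ 2 / 2 * huu + (1 - lorentz p u) ^ 2 / 2 * hvv
    - (1 - lorentz p u) * (1 - lorentz p v) * huv

/-- The hyperbolas `(chartX p - s) * (chartY p - t) = c` are plane sections of `hypQ`. -/
lemma exists_lorentz_add_eq_chart {p : E3} (hp : p ∈ hypQ) (s t : ℝ) :
    ∃ (n : E3) (c : ℝ), ∀ w ∈ hypQ, lorentz p w ≠ 1 →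
      lorentz n w + c = (1 - lorentz p w) * ((chartX p w - s) * (chartY p w - t)) := by
  refine ⟨(1 + p 2 ^ 2 - s * t) • p - t • ruling₁ p - s • ruling₂ p, 1 + p 2 ^ 2 + s * t,
    fun w hw hpw => ?_⟩
  have hw' : 1 - lorentz p w ≠ 0 := sub_ne_zero.2 hpw.symm
  have hww := lorentz_ruling_mul_add hp w w
  rw [lorentz_self_of_mem_hypQ hw] at hww
  simp only [map_sub, map_smul, LinearMap.sub_apply, LinearMap.smul_apply, smul_eq_mul, chartX,
    chartY]
  field_simp
  linear_combination (-1/2) * hww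

section Chart

variable {V : Set E3} {p : E3}

lemma chartX_sub_mul_chartY_sub_pos (hV : V ⊆ hypQ) (hp : p ∈ hypQ) (hpV : ∀ w ∈ V, lorentz p w < 1)
    (hpair : V.Pairwise fun u v => lorentz u v < 1) :
    ∀ u ∈ V, ∀ v ∈ V, u ≠ v → 0 < (chartX p u - chartX p v) * (chartY p u - chartY p v) := by
  intro u hu v hv huv
  have hpu := hpV u hu
  have hpv := hpV v hv
  rw [chartX_sub_mul_chartY_sub hp (hV hu) (hV hv) hpu.ne hpv.ne]
  have := hpair hu hv huv
  have : 0 < 1 - lorentz u v := by linarith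
  have : 0 < 1 - lorentz p u := by linarith
  have : 0 < 1 - lorentz p v := by linarith
  positivity

lemma isExtreme_segment_of_chart_sign (hV : V ⊆ hypQ) (hp : p ∈ hypQ)
    (hpV : ∀ w ∈ V, lorentz p w < 1) {a b : E3} (ha : a ∈ V) (hb : b ∈ V) (ε : ℝ)
    (hsign : ∀ w ∈ V, w ≠ a → w ≠ b → ε * ((chartX p w - chartX p a) * (chartY p w - chartY p b)
      + (chartX p w - chartX p b) * (chartY p w - chartY p a)) < 0) :
    IsExtreme ℝ (convexHull ℝ V) (segment ℝ a b) := by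
  obtain ⟨n₁, c₁, h₁⟩ := exists_lorentz_add_eq_chart hp (chartX p a) (chartY p b)
  obtain ⟨n₂, c₂, h₂⟩ := exists_lorentz_add_eq_chart hp (chartX p b) (chartY p a)
  have hl : ∀ w ∈ V, (ε • lorentz (n₁ + n₂)) w - -(ε * (c₁ + c₂))
      = (1 - lorentz p w) * (ε * ((chartX p w - chartX p a) * (chartY p w - chartY p b)
        + (chartX p w - chartX p b) * (chartY p w - chartY p a))) := fun w hw => by
    have e₁ := h₁ w (hV hw) (hpV w hw).ne
    have e₂ := h₂ w (hV hw) (hpV w hw).ne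
    simp only [LinearMap.smul_apply, map_add, LinearMap.add_apply, smul_eq_mul]
    linear_combination ε * e₁ + ε * e₂
  refine isExtreme_segment_of_lt (ε • lorentz (n₁ + n₂)) (c := -(ε * (c₁ + c₂))) ha hb ?_ ?_
    fun w hw hwa hwb => ?_
  · exact sub_eq_zero.1 ((hl a ha).trans (by ring))
  · exact sub_eq_zero.1 ((hl b hb).trans (by ring))
  · refine sub_neg.1 ((hl w hw).trans_lt (mul_neg_of_pos_of_neg ?_ (hsign w hw hwa hwb)))
    linarith [hpV w hw]

lemma isExtreme_segment_of_chartX_consecutive (hV : V ⊆ hypQ) (hp : p ∈ hypQ)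
    (hpV : ∀ w ∈ V, lorentz p w < 1)
    (hmono : ∀ u ∈ V, ∀ v ∈ V, u ≠ v → 0 < (chartX p u - chartX p v) * (chartY p u - chartY p v))
    {a b : E3} (ha : a ∈ V) (hb : b ∈ V) (hab : chartX p a < chartX p b)
    (hgap : ∀ w ∈ V, chartX p w ∉ Ioo (chartX p a) (chartX p b)) :
    IsExtreme ℝ (convexHull ℝ V) (segment ℝ a b) := by
  have hYab : chartY p a < chartY p b := by
    have := hmono a ha b hb (by rintro rfl; exact hab.false)
    nlinarith
  refine isExtreme_segment_of_chart_sign hV hp hpV ha hb (-1) fun w hw hwa hwb => ?_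
  have hwa' := hmono w hw a ha hwa
  have hwb' := hmono w hw b hb hwb
  rcases lt_or_gt_of_ne (fun h : chartX p w = chartX p a => by simp [h] at hwa') with h | h
  · have hY : chartY p w - chartY p a < 0 := neg_of_mul_pos_right hwa' (sub_neg.2 h).le
    nlinarith [mul_pos_of_neg_of_neg (sub_neg.2 h) (by linarith : chartY p w - chartY p b < 0),
      mul_pos_of_neg_of_neg (by linarith : chartX p w - chartX p b < 0) hY]
  · have h' : chartX p b < chartX p w :=
      (not_lt.1 fun h'' => hgap w hw ⟨h, h''⟩).lt_of_ne fun e => by simp [e] at hwb'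
    have hY : 0 < chartY p w - chartY p b := pos_of_mul_pos_right hwb' (sub_pos.2 h').le
    nlinarith [mul_pos (sub_pos.2 h) (by linarith : 0 < chartY p w - chartY p a),
      mul_pos (sub_pos.2 h') hY]

lemma isExtreme_segment_of_chartX_extreme (hV : V ⊆ hypQ) (hp : p ∈ hypQ)
    (hpV : ∀ w ∈ V, lorentz p w < 1)
    (hmono : ∀ u ∈ V, ∀ v ∈ V, u ≠ v → 0 < (chartX p u - chartX p v) * (chartY p u - chartY p v))
    {a b : E3} (ha : a ∈ V) (hb : b ∈ V)
    (hmin : ∀ w ∈ V, chartX p a ≤ chartX p w) (hmax : ∀ w ∈ V, chartX p w ≤ chartX p b) :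
    IsExtreme ℝ (convexHull ℝ V) (segment ℝ a b) := by
  refine isExtreme_segment_of_chart_sign hV hp hpV ha hb 1 fun w hw hwa hwb => ?_
  have hwa' := hmono w hw a ha hwa
  have hwb' := hmono w hw b hb hwb
  have h₁ : chartX p a < chartX p w :=
    (hmin w hw).lt_of_ne fun h => by simp [h] at hwa'
  have h₂ : chartX p w < chartX p b :=
    (hmax w hw).lt_of_ne fun h => by simp [h] at hwb'
  have hY₁ : 0 < chartY p w - chartY p a := pos_of_mul_pos_right hwa' (sub_pos.2 h₁).le
  have hY₂ : chartY p w - chartY p b < 0 := neg_of_mul_pos_right hwb' (sub_neg.2 h₂).le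
  nlinarith [mul_neg_of_pos_of_neg (sub_pos.2 h₁) hY₂, mul_neg_of_neg_of_pos (sub_neg.2 h₂) hY₁]

end Chart

lemma lorentz_lt_one_of_midpoint_mem_hypR {u v : E3} (hu : u ∈ hypQ) (hv : v ∈ hypQ)
    (h : midpoint ℝ u v ∈ hypR) : lorentz u v < 1 := by
  have hmid : (midpoint ℝ u v) 0 ^ 2 + (midpoint ℝ u v) 1 ^ 2 - (midpoint ℝ u v) 2 ^ 2
      = (1 + lorentz u v) / 2 := by
    simp only [midpoint_eq_smul_add, invOf_eq_inv, PiLp.smul_apply, PiLp.add_apply, smul_eq_mul,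
      lorentz_apply]
    linear_combination (1 / 4 : ℝ) * hu.out + (1 / 4 : ℝ) * hv.out
  linarith [h.out]

lemma pairwise_lorentz_lt_one {V : Set E3} (hVQ : V ⊆ hypQ)
    (hext : ∀ v ∈ V, v ∈ extremePoints ℝ (convexHull ℝ V)) (hins : convexHull ℝ V \ V ⊆ hypR) :
    V.Pairwise fun u v => lorentz u v < 1 := by
  intro u hu v hv huv
  have hmid := midpoint_mem_openSegment (𝕜 := ℝ) u v
  refine lorentz_lt_one_of_midpoint_mem_hypR (hVQ hu) (hVQ hv) (hins ⟨?_, fun hm => huv ?_⟩)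
  · exact segment_subset_convexHull hu hv (openSegment_subset_segment ℝ u v hmid)
  · obtain ⟨h₁, h₂⟩ := (mem_extremePoints.1 (hext _ hm)).2 _ (subset_convexHull ℝ V hu) _
      (subset_convexHull ℝ V hv) hmid
    exact h₁.trans h₂.symm

open Filter Topology

def rotate (t : ℝ) (u : E3) : E3 :=
  !₂[u 0 * Real.cos t - u 1 * Real.sin t, u 0 * Real.sin t + u 1 * Real.cos t, u 2]

lemma rotate_mem_hypQ {u : E3} (hu : u ∈ hypQ) (t : ℝ) : rotate t u ∈ hypQ := by
  show (rotate t u) 0 ^ 2 + (rotate t u) 1 ^ 2 - (rotate t u) 2 ^ 2 = 1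
  simp only [rotate, Matrix.cons_val_zero, Matrix.cons_val_one, Matrix.cons_val]
  linear_combination hu.out + (u 0 ^ 2 + u 1 ^ 2) * Real.sin_sq_add_cos_sq t

lemma lorentz_rotate_self {u : E3} (hu : u ∈ hypQ) (t : ℝ) :
    lorentz (rotate t u) u = 1 - (1 + u 2 ^ 2) * (1 - Real.cos t) := by
  simp only [rotate, lorentz_apply, Matrix.cons_val_zero, Matrix.cons_val_one, Matrix.cons_val]
  linear_combination Real.cos t * hu.out

lemma exists_mem_hypQ_forall_lorentz_lt_one {u₀ : E3} (hu₀ : u₀ ∈ hypQ) {V : Set E3}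
    (hV : V.Finite) (hlt : ∀ w ∈ V, w ≠ u₀ → lorentz u₀ w < 1) :
    ∃ p ∈ hypQ, ∀ w ∈ V, lorentz p w < 1 := by
  have hev : ∀ w ∈ V, ∀ᶠ t in 𝓝[>] 0, lorentz (rotate t u₀) w < 1 := by
    intro w hw
    rcases eq_or_ne w u₀ with rfl | hw₀
    · filter_upwards [Ioo_mem_nhdsGT Real.pi_pos] with t ht
      have hcos : Real.cos t < 1 := by
        simpa using Real.cos_lt_cos_of_nonneg_of_le_pi le_rfl ht.2.le ht.1
      rw [lorentz_rotate_self hu₀]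
      nlinarith [sq_nonneg (w 2)]
    · refine nhdsWithin_le_nhds (ContinuousAt.eventually_lt ?_ continuousAt_const ?_)
      · simp only [rotate, lorentz_apply]
        fun_prop
      · simpa [rotate, lorentz_apply] using hlt w hw hw₀
  obtain ⟨t, ht⟩ := ((eventually_all_finite hV).2 hev).exists
  exact ⟨rotate t u₀, rotate_mem_hypQ hu₀ t, ht⟩

lemma finrank_add_one_le_card_of_affineSpan_eq_top {k V P : Type*} [DivisionRing k]
    [AddCommGroup V] [Module k V] [AddTorsor V P] {s : Set P} [Fintype s]
    (h : affineSpan k s = ⊤) : Module.finrank k V + 1 ≤ Fintype.card s := by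
  have : Nonempty s := (AffineSubspace.nonempty_of_affineSpan_eq_top k V P h).to_subtype
  have hle := finrank_vectorSpan_range_add_one_le k ((↑) : s → P)
  rwa [Subtype.range_coe, AffineSubspace.vectorSpan_eq_top_of_affineSpan_eq_top k V P h,
    finrank_top] at hle

namespace SimpleGraph

variable {β : Type*} [DecidableEq β] {G : SimpleGraph β}

lemma exists_isHamiltonianCycle_of_adj_add_one {n : ℕ} (σ : Fin (n + 3) ≃ β)
    (h : ∀ i, G.Adj (σ i) (σ (i + 1))) : ∃ a, ∃ p : G.Walk a a, p.IsHamiltonianCycle := by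
  let f : cycleGraph (n + 3) →g G :=
    ⟨σ, fun {i j} hij => by
      rcases hij with hij | hij
      · rw [sub_eq_iff_eq_add'] at hij
        exact hij ▸ (h j).symm
      · rw [sub_eq_iff_eq_add'] at hij
        exact hij ▸ h i⟩
  have hcycle : (cycleGraph.cycle n).IsHamiltonianCycle :=
    Walk.isHamiltonianCycle_iff_isCycle_and_length_eq.2 ⟨cycleGraph.isCycle_cycle, by simp⟩
  exact ⟨_, _, hcycle.map (f := f) σ.bijective⟩

lemma exists_isHamiltonianCycle_of_injective [Fintype β] {γ : Type*} [LinearOrder γ] {f : β → γ}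
    (hf : Function.Injective f) (hcard : 3 ≤ Fintype.card β)
    (hnext : ∀ a b, f a < f b → (∀ c, f c ∉ Ioo (f a) (f b)) → G.Adj a b)
    (hends : ∀ a b, a ≠ b → (∀ c, f a ≤ f c) → (∀ c, f c ≤ f b) → G.Adj a b) :
    ∃ a, ∃ p : G.Walk a a, p.IsHamiltonianCycle := by
  let _ := LinearOrder.lift' f hf
  obtain ⟨n, hn⟩ : ∃ n, Fintype.card β = n + 3 := ⟨_, (Nat.sub_add_cancel hcard).symm⟩
  let σ := monoEquivOfFin β hn
  refine exists_isHamiltonianCycle_of_adj_add_one σ.toEquiv fun i => ?_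
  rcases eq_or_ne i (Fin.last _) with rfl | hi
  · rw [Fin.last_add_one]
    refine (hends _ _ (σ.injective.ne (Fin.last_pos.ne)) (fun c => ?_) fun c => ?_).symm
    · obtain ⟨j, rfl⟩ := σ.surjective c
      exact σ.monotone (Fin.zero_le j)
    · obtain ⟨j, rfl⟩ := σ.surjective c
      exact σ.monotone (Fin.le_last j)
  · have hval : ((i + 1 : Fin (n + 3)) : ℕ) = i + 1 :=
      Fin.val_add_one_of_lt (Fin.lt_last_iff_ne_last.2 hi)
    refine hnext _ _ (σ.strictMono (Fin.lt_def.2 (by omega))) fun c hc => ?_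
    obtain ⟨j, rfl⟩ := σ.surjective c
    have h₁ : i < j := σ.lt_iff_lt.1 hc.1
    have h₂ : j < i + 1 := σ.lt_iff_lt.1 hc.2
    rw [Fin.lt_def] at h₁ h₂
    omega

end SimpleGraph

lemma exists_isHamiltonianCycle_oneSkeleton {V : Set E3}
    (hV : IsInscribedVertexSet hypQ hypR V) :
    ∃ a, ∃ c : (oneSkeleton V).Walk a a, c.IsHamiltonianCycle := by
  classical
  obtain ⟨hfin, hVQ, hspan, hext, hins⟩ := hV
  have := hfin.fintype
  have hcard := finrank_add_one_le_card_of_affineSpan_eq_top hspan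
  rw [finrank_euclideanSpace_fin] at hcard
  obtain ⟨u₀, hu₀⟩ : Nonempty V := Fintype.card_pos_iff.1 (by omega)
  have hpair := pairwise_lorentz_lt_one hVQ hext hins
  obtain ⟨p, hp, hpV⟩ := exists_mem_hypQ_forall_lorentz_lt_one (hVQ hu₀) hfin
    fun w hw hw₀ => hpair hu₀ hw hw₀.symm
  have hmono := chartX_sub_mul_chartY_sub_pos hVQ hp hpV hpair
  refine SimpleGraph.exists_isHamiltonianCycle_of_injective (f := fun w : V => chartX p w)
    (fun u v huv => ?_) (by omega) (fun a b hab hgap => ?_) fun a b hab hmin hmax => ?_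
  · by_contra hne
    simpa [huv] using hmono u u.2 v v.2 (Subtype.coe_ne_coe.2 hne)
  · exact ⟨ne_of_apply_ne (fun w : V => chartX p w) hab.ne,
      isExtreme_segment_of_chartX_consecutive hVQ hp hpV hmono a.2 b.2 hab
        fun w hw => hgap ⟨w, hw⟩⟩
  · exact ⟨hab, isExtreme_segment_of_chartX_extreme hVQ hp hpV hmono a.2 b.2
      (fun w hw => hmin ⟨w, hw⟩) fun w hw => hmax ⟨w, hw⟩⟩

theorem hamiltonian_of_inscribed_hyperboloid_general
    {α : Type*} [DecidableEq α] (Γ : SimpleGraph α)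
    (h : RealizesInscribed hypQ hypR Γ) :
    HasHamiltonianCycle Γ := by
  classical
  obtain ⟨V, hV, ⟨e⟩⟩ := h
  obtain ⟨a, c, hc⟩ := exists_isHamiltonianCycle_oneSkeleton hV
  exact ⟨e.symm a, c.map e.symm.toHom, hc.map e.symm.bijective⟩

/-- If `Γ` is realized as the 1-skeleton of a convex polyhedron inscribed in the
hyperboloid, then `Γ` admits a Hamiltonian cycle. -/
theorem hamiltonian_of_inscribed_hyperboloid
    {α : Type*} [Fintype α] [DecidableEq α] (Γ : SimpleGraph α)
    (h : RealizesInscribed hypQ hypR Γ) :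
    HasHamiltonianCycle Γ :=
  hamiltonian_of_inscribed_hyperboloid_general Γ h

end
end

section
/- Let N ≥ 2, let E be a finite set of unordered pairs of distinct elements of {1,…,N} with weights θ : E → ℝ that are balanced, let x : {1,…,N} → ℝ be injective, and let a, b, c, d ∈ ℝ satisfy a·d − b·c ≠ 0 and c·x_i + d ≠ 0 for all i. Set x'_i = (a·x_i + b)/(c·x_i + d). Then Σ_{e = {i,j} ∈ E} θ(e)·log((x'_i − x'_j)²) = Σ_{e = {i,j} ∈ E} θ(e)·log((x_i − x_j)²). (Thus the θ-weighted length function of an ideal polygon, computed from λ-lengths, is independent of the choice of horocycles and of the Möbius normalization, precisely because θ is balanced.) -/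
open scoped Classical

noncomputable section

/-- `pairLog f {i,j} = log ((f i − f j)²)`, which (up to the choice of horocycles) is
twice the hyperbolic λ-length between the ideal points `f i` and `f j` of the upper
half-plane. -/
def pairLog {α : Type*} (f : α → ℝ) : Sym2 α → ℝ :=
  Sym2.lift ⟨fun i j => Real.log ((f i - f j) ^ 2),
    fun i j => by simp only []; rw [show (f i - f j) ^ 2 = (f j - f i) ^ 2 by ring]⟩

/-! A Möbius map `m t = (a t + b)/(c t + d)` satisfies
`(m s − m t)² = m'(s) · m'(t) · (s − t)²` with `m'(t) = (a d − b c)/(c t + d)²`.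
Hence every `pairLog` changes by `log m'(x_i) + log m'(x_j)`, a sum of vertex terms,
and balanced weights annihilate any sum of vertex terms over the edges. -/

open Finset

theorem sum_filter_mem_sym2_mk {α : Type*} [Fintype α] [DecidableEq α] {i j : α}
    (hij : i ≠ j) (p : α → ℝ) : ∑ v with v ∈ s(i, j), p v = p i + p j := by
  rw [show univ.filter (· ∈ s(i, j)) = {i, j} by ext; simp [Sym2.mem_iff], sum_pair hij]

theorem sum_mul_sum_filter_mem_eq_zero_of_balanced {α : Type*} [Fintype α] [DecidableEq α]
    (E : Finset (Sym2 α)) (θ : Sym2 α → ℝ)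
    (hbal : ∀ v : α, ∑ e ∈ E.filter (fun e => v ∈ e), θ e = 0) (p : α → ℝ) :
    ∑ e ∈ E, θ e * ∑ v with v ∈ e, p v = 0 :=
  calc ∑ e ∈ E, θ e * ∑ v with v ∈ e, p v
      = ∑ v, (∑ e ∈ E.filter (fun e => v ∈ e), θ e) * p v := by
        simp_rw [mul_sum, sum_mul, sum_filter]
        exact sum_comm
    _ = 0 := by simp [hbal]

theorem pairLog_mk_eq_of_sub_sq_eq {α : Type*} {f g w : α → ℝ} {i j : α}
    (hfij : f i ≠ f j) (hwi : w i ≠ 0) (hwj : w j ≠ 0)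
    (hfg : (g i - g j) ^ 2 = w i * w j * (f i - f j) ^ 2) :
    pairLog g s(i, j) = pairLog f s(i, j) + (Real.log (w i) + Real.log (w j)) := by
  have hsq : (f i - f j) ^ 2 ≠ 0 := pow_ne_zero _ (sub_ne_zero.mpr hfij)
  simp only [pairLog, Sym2.lift_mk]
  rw [hfg, Real.log_mul (mul_ne_zero hwi hwj) hsq, Real.log_mul hwi hwj]
  ring

theorem sum_mul_pairLog_eq_of_sub_sq_eq {α : Type*} [Fintype α] [DecidableEq α]
    (E : Finset (Sym2 α)) (hE : ∀ e ∈ E, ¬ e.IsDiag) (θ : Sym2 α → ℝ)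
    (hbal : ∀ v : α, ∑ e ∈ E.filter (fun e => v ∈ e), θ e = 0)
    {f g w : α → ℝ} (hf : Function.Injective f) (hw : ∀ v, w v ≠ 0)
    (hfg : ∀ i j, (g i - g j) ^ 2 = w i * w j * (f i - f j) ^ 2) :
    ∑ e ∈ E, θ e * pairLog g e = ∑ e ∈ E, θ e * pairLog f e := by
  have hedge : ∀ e ∈ E, pairLog g e = pairLog f e + ∑ v with v ∈ e, Real.log (w v) := by
    intro e he
    induction e using Sym2.ind with
    | _ i j =>
      have hij : i ≠ j := fun h => hE _ he (Sym2.mk_isDiag_iff.mpr h)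
      rw [sum_filter_mem_sym2_mk hij,
        pairLog_mk_eq_of_sub_sq_eq (hf.ne hij) (hw i) (hw j) (hfg i j)]
  calc ∑ e ∈ E, θ e * pairLog g e
      = ∑ e ∈ E, θ e * pairLog f e + ∑ e ∈ E, θ e * ∑ v with v ∈ e, Real.log (w v) := by
        rw [← sum_add_distrib]
        exact sum_congr rfl fun e he => by rw [hedge e he, mul_add]
    _ = ∑ e ∈ E, θ e * pairLog f e := by
        rw [sum_mul_sum_filter_mem_eq_zero_of_balanced E θ hbal, add_zero]

theorem moebius_sub_moebius_sq {a b c d s t : ℝ} (hs : c * s + d ≠ 0) (ht : c * t + d ≠ 0) :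
    ((a * s + b) / (c * s + d) - (a * t + b) / (c * t + d)) ^ 2
      = (a * d - b * c) / (c * s + d) ^ 2 * ((a * d - b * c) / (c * t + d) ^ 2)
        * (s - t) ^ 2 := by
  rw [div_sub_div _ _ hs ht, div_pow]
  field_simp
  ring

theorem weighted_length_moebius_invariant_general (N : ℕ)
    (E : Finset (Sym2 (Fin N))) (hE : ∀ e ∈ E, ¬ e.IsDiag)
    (θ : Sym2 (Fin N) → ℝ)
    (hbal : ∀ v : Fin N, ∑ e ∈ E.filter (fun e => v ∈ e), θ e = 0)
    (x : Fin N → ℝ) (hx : Function.Injective x)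
    (a b c d : ℝ) (hdet : a * d - b * c ≠ 0) (hden : ∀ i, c * x i + d ≠ 0) :
    ∑ e ∈ E, θ e * pairLog (fun i => (a * x i + b) / (c * x i + d)) e
      = ∑ e ∈ E, θ e * pairLog x e :=
  sum_mul_pairLog_eq_of_sub_sq_eq E hE θ hbal hx
    (fun v => div_ne_zero hdet (pow_ne_zero 2 (hden v)))
    (fun i j => moebius_sub_moebius_sq (hden i) (hden j))

/-- **Möbius invariance of balanced weighted length functions.** If the weights
`θ : E → ℝ` are balanced (at every vertex the incident weights sum to `0`), `x` is an
injective configuration of ideal points, and `x'` is its image under the Möbius map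
`t ↦ (a·t + b)/(c·t + d)` (with `a·d − b·c ≠ 0` and all denominators nonzero), then the
θ-weighted length function is unchanged:
`Σ_{e={i,j}∈E} θ(e)·log((x'_i − x'_j)²) = Σ_{e={i,j}∈E} θ(e)·log((x_i − x_j)²)`. -/
theorem weighted_length_moebius_invariant (N : ℕ) (hN : 2 ≤ N)
    (E : Finset (Sym2 (Fin N))) (hE : ∀ e ∈ E, ¬ e.IsDiag)
    (θ : Sym2 (Fin N) → ℝ)
    (hbal : ∀ v : Fin N, ∑ e ∈ E.filter (fun e => v ∈ e), θ e = 0)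
    (x : Fin N → ℝ) (hx : Function.Injective x)
    (a b c d : ℝ) (hdet : a * d - b * c ≠ 0) (hden : ∀ i, c * x i + d ≠ 0) :
    ∑ e ∈ E, θ e * pairLog (fun i => (a * x i + b) / (c * x i + d)) e
      = ∑ e ∈ E, θ e * pairLog x e :=
  weighted_length_moebius_invariant_general N E hE θ hbal x hx a b c d hdet hden

end
end

section
/- Let N ≥ 4 and let U = {x ∈ ℝ^{N−3} : 1 < x₁ < x₂ < ⋯ < x_{N−3}} (the space of normalized marked ideal N-gons in the hyperbolic plane). Then the topological space X = {(x, y) ∈ U × U : x ≠ y}, with the subspace topology from ℝ^{N−3} × ℝ^{N−3}, is homotopy equivalent to the unit sphere in ℝ^{N−3} (a sphere of dimension N−4). In particular, for N ≥ 6, X is path-connected and simply connected. (Via the identification of a marked ideal polyhedron in anti-de Sitter space with its pair of distinct left and right ideal polygons, this is the statement that the space AdSPolyh_N of marked non-degenerate convex ideal polyhedra in AdS³ with N vertices is homotopy equivalent to S^{N−4}, hence connected and simply connected for N ≥ 6.) -/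
/-!
For a convex set `U` with an interior point `c`, the difference map `(x, y) ↦ x - y` is a
homotopy equivalence from the pairs of distinct points of `U` to `E ∖ {0}`: a homotopy inverse
sends `v` to the pair `c ± r v / ‖v‖`, and both composites are joined to the identity by
straight-line homotopies, along which the difference of the two points only moves inside a ray.
Radial projection then identifies `E ∖ {0}` with the unit sphere up to homotopy.

For `dim E ≥ 3`, `E ∖ {0}` is simply connected: a loop is homotopic to a polygonal loop, which
lies in finitely many planes through the origin; some ray from the origin avoids all of them, and
the complement of a ray is star-shaped, hence contractible.
-/

noncomputable section

/-- The space of normalized marked ideal `N`-gons in the hyperbolic plane: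
`1 < x₁ < x₂ < ⋯ < x_{N−3}`. -/
def Ucfg (N : ℕ) : Set (Fin (N - 3) → ℝ) :=
  {x | (∀ t, 1 < x t) ∧ StrictMono x}

/-- The space of marked non-degenerate convex ideal polyhedra in `AdS³` with `N`
vertices, identified with the space of pairs of distinct normalized marked ideal
`N`-gons (the left and right polygons). -/
def AdSPolyh (N : ℕ) : Set ((Fin (N - 3) → ℝ) × (Fin (N - 3) → ℝ)) :=
  {p | p.1 ∈ Ucfg N ∧ p.2 ∈ Ucfg N ∧ p.1 ≠ p.2}

open Set Metric unitInterval
open scoped ContinuousMap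

section SegmentHomotopy

variable {X E : Type*} [TopologicalSpace X] [AddCommGroup E] [TopologicalSpace E]
  [IsTopologicalAddGroup E] [Module ℝ E] [ContinuousSMul ℝ E] {S : Set E}

theorem ContinuousMap.homotopicRel_of_forall_segment_subset {f g : C(X, S)} {T : Set X}
    (hfg : ∀ x ∈ T, f x = g x) (hS : ∀ x, segment ℝ (f x : E) (g x) ⊆ S) :
    f.HomotopicRel g T :=
  ⟨{ toFun := fun p => ⟨AffineMap.lineMap (f p.2 : E) (g p.2) (p.1 : ℝ),
        hS p.2 (lineMap_mem_segment ℝ _ _ p.1.2)⟩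
     continuous_toFun := by fun_prop
     map_zero_left := by simp
     map_one_left := by simp
     prop' := fun t x hx => by simp [hfg x hx] }⟩

theorem ContinuousMap.homotopic_of_forall_segment_subset {f g : C(X, S)}
    (hS : ∀ x, segment ℝ (f x : E) (g x) ⊆ S) : f.Homotopic g :=
  (homotopicRel_of_forall_segment_subset (T := ∅) (by simp) hS).homotopic

end SegmentHomotopy

section PolygonalApprox

def gridPoint (m i : ℕ) : I := projIcc 0 1 zero_le_one (i / m)

theorem coe_gridPoint {m i : ℕ} (hi : i ≤ m) : (gridPoint m i : ℝ) = i / m := by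
  rw [gridPoint, projIcc_of_mem _ ⟨by positivity, div_le_one_of_le₀ (by exact_mod_cast hi)
    (by positivity)⟩]

theorem dist_gridPoint_le {m j : ℕ} (hm : 0 < m) (hj : j ≤ m) {t : I}
    (h : |(j : ℝ) - m * t| ≤ 1) : dist (gridPoint m j) t ≤ 1 / m := by
  have hm' : (0 : ℝ) < m := by exact_mod_cast hm
  have : (j : ℝ) / m - t = (j - m * t) / m := by field_simp
  rw [Subtype.dist_eq, coe_gridPoint hj, Real.dist_eq, this, abs_div, abs_of_pos hm']
  gcongr

theorem exists_nat_le_mul_le_add_one {m : ℕ} (hm : 0 < m) (t : I) :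
    ∃ i < m, (i : ℝ) ≤ m * t ∧ m * (t : ℝ) ≤ i + 1 := by
  have h₀ : 0 ≤ m * (t : ℝ) := mul_nonneg (Nat.cast_nonneg m) t.2.1
  have h₁ : m * (t : ℝ) ≤ m := mul_le_of_le_one_right (Nat.cast_nonneg m) t.2.2
  rcases lt_or_ge ⌊m * (t : ℝ)⌋₊ m with h | h
  · exact ⟨_, h, Nat.floor_le h₀, (Nat.lt_floor_add_one _).le⟩
  · have : (m : ℝ) ≤ ⌊m * (t : ℝ)⌋₊ := by exact_mod_cast h
    refine ⟨m - 1, by omega, ?_, ?_⟩ <;>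
      push_cast [Nat.one_le_iff_ne_zero.2 hm.ne'] <;> linarith [Nat.floor_le h₀]

variable {E : Type*} [AddCommGroup E] [Module ℝ E]

/-- The piecewise linear interpolation of `γ` between the points `γ (i / m)`, written with the
hat functions `t ↦ max 0 (1 - |m t - i|)` so that its continuity is evident. -/
def polygonalApprox (γ : I → E) (m : ℕ) (t : I) : E :=
  ∑ i ∈ Finset.range (m + 1), max 0 (1 - |m * (t : ℝ) - i|) • γ (gridPoint m i)

theorem continuous_polygonalApprox [TopologicalSpace E] [IsTopologicalAddGroup E]
    [ContinuousSMul ℝ E] (γ : I → E) (m : ℕ) : Continuous (polygonalApprox γ m) := by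
  unfold polygonalApprox
  fun_prop

theorem polygonalApprox_eq_lineMap (γ : I → E) {m i : ℕ} {t : I} (hi : i < m)
    (h₁ : (i : ℝ) ≤ m * t) (h₂ : m * (t : ℝ) ≤ i + 1) :
    polygonalApprox γ m t =
      AffineMap.lineMap (γ (gridPoint m i)) (γ (gridPoint m (i + 1))) (m * (t : ℝ) - i) := by
  have hvanish : ∀ j ∈ Finset.range (m + 1), j ∉ ({i, i + 1} : Finset ℕ) →
      max 0 (1 - |m * (t : ℝ) - j|) • γ (gridPoint m j) = 0 := by
    intro j _ hj
    simp only [Finset.mem_insert, Finset.mem_singleton, not_or] at hj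
    have : 1 ≤ |m * (t : ℝ) - j| := by
      rcases Nat.lt_or_gt_of_ne hj.1 with h | h
      · have : (j : ℝ) + 1 ≤ i := by exact_mod_cast h
        exact le_abs.2 (Or.inl (by linarith))
      · have : (i : ℝ) + 2 ≤ j := by exact_mod_cast (by omega : i + 2 ≤ j)
        exact le_abs.2 (Or.inr (by linarith))
    simp [this]
  rw [polygonalApprox, ← Finset.sum_subset (by intro j; simp; omega) hvanish,
    Finset.sum_pair (by omega), AffineMap.lineMap_apply_module]
  congr 2
  · rw [abs_of_nonneg (by linarith), max_eq_right (by linarith)]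
  · push_cast
    rw [abs_of_nonpos (by linarith), max_eq_right (by linarith)]
    ring

theorem polygonalApprox_zero (γ : I → E) {m : ℕ} (hm : 0 < m) :
    polygonalApprox γ m 0 = γ 0 := by
  rw [polygonalApprox_eq_lineMap γ hm (by simp) (by simp)]
  simp [gridPoint, projIcc_left]

theorem polygonalApprox_one (γ : I → E) {m : ℕ} (hm : 0 < m) :
    polygonalApprox γ m 1 = γ 1 := by
  have hcast : ((m - 1 : ℕ) : ℝ) = m - 1 := by
    push_cast [Nat.one_le_iff_ne_zero.2 hm.ne']
    ring
  rw [polygonalApprox_eq_lineMap γ (i := m - 1) (by omega) (by simp [hcast]) (by simp [hcast]),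
    Nat.sub_add_cancel hm]
  have hgrid : gridPoint m m = 1 := Subtype.ext <| by simp [coe_gridPoint le_rfl, hm.ne']
  simp [hcast, hgrid]

theorem exists_polygonalApprox_mem_segment (γ : I → E) {m : ℕ} (hm : 0 < m) (t : I) :
    ∃ i < m, polygonalApprox γ m t ∈ segment ℝ (γ (gridPoint m i)) (γ (gridPoint m (i + 1))) ∧
      dist (gridPoint m i) t ≤ 1 / m ∧ dist (gridPoint m (i + 1)) t ≤ 1 / m := by
  obtain ⟨i, hi, h₁, h₂⟩ := exists_nat_le_mul_le_add_one hm t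
  refine ⟨i, hi, ?_, dist_gridPoint_le hm hi.le ?_, dist_gridPoint_le hm hi ?_⟩
  · rw [polygonalApprox_eq_lineMap γ hi h₁ h₂]
    exact lineMap_mem_segment ℝ _ _ ⟨by linarith, by linarith⟩
  · rw [abs_le]
    constructor <;> linarith
  · push_cast
    rw [abs_le]
    constructor <;> linarith

end PolygonalApprox

section PolygonalPaths

variable {E : Type*} [NormedAddCommGroup E] [NormedSpace ℝ E]

theorem dist_polygonalApprox_lt {γ : I → E} {m : ℕ} (hm : 0 < m) {δ : ℝ}
    (hγ : ∀ a b, dist a b ≤ 1 / m → dist (γ a) (γ b) < δ) (t : I) :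
    dist (polygonalApprox γ m t) (γ t) < δ := by
  obtain ⟨i, -, hseg, hi, hi'⟩ := exists_polygonalApprox_mem_segment γ hm t
  exact (convex_ball (γ t) δ).segment_subset (hγ _ _ hi) (hγ _ _ hi') hseg

theorem Path.exists_homotopic_polygonal {S : Set E} (hS : IsOpen S) {x y : S} (γ : Path x y) :
    ∃ m : ℕ, ∃ q : Path x y, γ.Homotopic q ∧
      ∀ t, ∃ i < m, (q t : E) ∈ segment ℝ (γ (gridPoint m i) : E) (γ (gridPoint m (i + 1))) := by
  set g : I → E := fun t => γ t
  have hg : Continuous g := by fun_prop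
  obtain ⟨δ, hδ, hδS⟩ := (isCompact_range hg).exists_thickening_subset_open hS
    (range_subset_iff.2 fun t => (γ t).2)
  obtain ⟨η, hη, hgη⟩ := Metric.uniformContinuous_iff.1
    (CompactSpace.uniformContinuous_of_continuous hg) δ hδ
  obtain ⟨k, hk⟩ := exists_nat_one_div_lt hη
  have hm : 0 < k + 1 := k.succ_pos
  set q := polygonalApprox g (k + 1)
  have hclose : ∀ t, dist (q t) (g t) < δ :=
    dist_polygonalApprox_lt hm fun a b hab => hgη <| hab.trans_lt (by exact_mod_cast hk)
  have hsegS : ∀ t, segment ℝ (g t) (q t) ⊆ S := fun t =>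
    ((convex_ball (g t) δ).segment_subset (mem_ball_self hδ) (mem_ball.2 (hclose t))).trans
      ((ball_subset_thickening (mem_range_self t) δ).trans hδS)
  let qS : Path x y :=
    { toFun := fun t => ⟨q t, hsegS t (right_mem_segment ℝ _ _)⟩
      continuous_toFun := (continuous_polygonalApprox g _).subtype_mk _
      source' := Subtype.ext <| by simp [q, polygonalApprox_zero g hm, g]
      target' := Subtype.ext <| by simp [q, polygonalApprox_one g hm, g] }
  refine ⟨k + 1, qS, ?_, fun t => ?_⟩
  · refine ContinuousMap.homotopicRel_of_forall_segment_subset ?_ hsegS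
    rintro _ (rfl | rfl) <;> simp
  · obtain ⟨i, hi, hseg, -⟩ := exists_polygonalApprox_mem_segment g hm t
    exact ⟨i, hi, hseg⟩

end PolygonalPaths

section Rays

variable {E : Type*} [AddCommGroup E] [Module ℝ E]

theorem segment_smul_self_subset_compl_zero {v : E} (hv : v ≠ 0) {c : ℝ} (hc : 0 < c) :
    segment ℝ (c • v) v ⊆ {0}ᶜ := by
  rintro _ ⟨a, b, ha, hb, hab, rfl⟩
  have hcoef : 0 < a * c + b := by
    rcases ha.lt_or_eq with ha | rfl
    · positivity
    · linarith
  simpa [smul_smul, ← add_smul] using And.intro hcoef.ne' hv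

theorem starConvex_compl_ray {v : E} (hv : v ≠ 0) :
    StarConvex ℝ (-v) {z : E | ∀ s : ℝ, 0 ≤ s → s • v ≠ z} := by
  intro z hz a b ha hb hab s hs h
  rcases hb.eq_or_lt with rfl | hb
  · obtain rfl : a = 1 := by linarith
    have : (s + 1) • v = 0 := by
      rw [add_smul, h]
      simp
    exact hv ((smul_eq_zero.1 this).resolve_left (by linarith))
  · refine hz ((s + a) / b) (by positivity) ?_
    rw [div_eq_inv_mul, mul_smul, add_smul, h]
    simp [hb.ne']

theorem exists_forall_notMem_span_pair (hE : 2 < Module.finrank ℝ E) {ι : Type*} [Finite ι]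
    (a b : ι → E) : ∃ v : E, ∀ i, v ∉ Submodule.span ℝ {a i, b i} := by
  classical
  by_contra! h
  obtain ⟨i, hi⟩ := Subspace.exists_eq_top_of_iUnion_eq_univ
    (eq_univ_of_forall fun v => mem_iUnion.2 (h v))
  have := finrank_span_finset_le_card (R := ℝ) ({a i, b i} : Finset E)
  rw [Finset.coe_pair, Set.finrank, hi, finrank_top] at this
  exact (this.trans Finset.card_le_two).not_gt hE

theorem Path.homotopic_refl_of_forall_mem_span [TopologicalSpace E] [IsTopologicalAddGroup E]
    [ContinuousSMul ℝ E] (hE : 2 < Module.finrank ℝ E) {ι : Type*} [Finite ι] (a b : ι → E)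
    {x : ({0}ᶜ : Set E)} (q : Path x x)
    (hq : ∀ t, ∃ i, (q t : E) ∈ Submodule.span ℝ {a i, b i}) : q.Homotopic (Path.refl x) := by
  obtain ⟨v, hv⟩ := exists_forall_notMem_span_pair hE a b
  have hv₀ : v ≠ 0 := by
    rintro rfl
    obtain ⟨i, -⟩ := hq 0
    exact hv i (Submodule.zero_mem _)
  set W := {z : E | ∀ s : ℝ, 0 ≤ s → s • v ≠ z}
  have hqW : ∀ t, (q t : E) ∈ W := by
    intro t s hs h
    obtain ⟨i, hi⟩ := hq t
    rcases hs.eq_or_lt with rfl | hs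
    · exact (q t).2 (by simp [← h])
    · exact hv i (by simpa [← h, hs.ne'] using Submodule.smul_mem _ s⁻¹ hi)
  have hW : W ⊆ {0}ᶜ := fun z hz h₀ => hz 0 le_rfl (by rw [zero_smul, mem_singleton_iff.1 h₀])
  have : ContractibleSpace W := (starConvex_compl_ray hv₀).contractibleSpace ⟨_, hqW 0⟩
  let qW : Path (⟨x, by simpa using hqW 0⟩ : W) ⟨x, by simpa using hqW 0⟩ :=
    { toFun := fun t => ⟨q t, hqW t⟩
      source' := by simp
      target' := by simp }
  exact (SimplyConnectedSpace.paths_homotopic qW (Path.refl _)).map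
    ⟨inclusion hW, continuous_inclusion hW⟩

end Rays

section Punctured

variable {E : Type*} [NormedAddCommGroup E] [NormedSpace ℝ E]

theorem simplyConnectedSpace_compl_zero (hE : 2 < Module.finrank ℝ E) :
    SimplyConnectedSpace ({0}ᶜ : Set E) := by
  rw [simply_connected_iff_loops_nullhomotopic]
  refine ⟨isPathConnected_iff_pathConnectedSpace.1 <| isPathConnected_compl_singleton_of_one_lt_rank
    (Module.lt_rank_of_lt_finrank (M := E) (by omega)) 0, fun x γ => ?_⟩
  obtain ⟨m, q, hγq, hq⟩ := γ.exists_homotopic_polygonal isOpen_compl_singleton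
  refine hγq.trans <| q.homotopic_refl_of_forall_mem_span hE
    (fun i : Fin m => (γ (gridPoint m i) : E)) (fun i => γ (gridPoint m (i + 1))) fun t => ?_
  obtain ⟨i, hi, hqt⟩ := hq t
  exact ⟨⟨i, hi⟩, (Submodule.span ℝ _).convex.segment_subset
    (Submodule.subset_span (by simp)) (Submodule.subset_span (by simp)) hqt⟩

variable (E) in
def complZeroHomotopyEquivUnitSphere : ({0}ᶜ : Set E) ≃ₕ sphere (0 : E) 1 :=
  haveI : ContractibleSpace (Ioi (0 : ℝ)) := (convex_Ioi 0).contractibleSpace nonempty_Ioi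
  (homeomorphUnitSphereProd E).toHomotopyEquiv.trans <|
    ((ContinuousMap.HomotopyEquiv.refl _).prodCongr (ContractibleSpace.hequiv _ Unit).some).trans
      (Homeomorph.prodUnique _ Unit).toHomotopyEquiv

theorem simplyConnectedSpace_unitSphere (hE : 2 < Module.finrank ℝ E) :
    SimplyConnectedSpace (sphere (0 : E) 1) :=
  have := simplyConnectedSpace_compl_zero hE
  (complZeroHomotopyEquivUnitSphere E).symm.simplyConnectedSpace

end Punctured

def ContinuousLinearEquiv.complZeroHomeomorph {R M M₂ : Type*} [Semiring R] [AddCommMonoid M]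
    [TopologicalSpace M] [Module R M] [AddCommMonoid M₂] [TopologicalSpace M₂] [Module R M₂]
    (e : M ≃L[R] M₂) : ({0}ᶜ : Set M) ≃ₜ ({0}ᶜ : Set M₂) :=
  e.toHomeomorph.subtype fun _ => by simp

def distinctPairs {α : Type*} (U : Set α) : Set (α × α) := {p | p.1 ∈ U ∧ p.2 ∈ U ∧ p.1 ≠ p.2}

section DistinctPairs

variable {E : Type*} [NormedAddCommGroup E] [NormedSpace ℝ E] {U : Set E} {c : E} {r : ℝ}

theorem add_sub_mem_distinctPairs (hU : closedBall c r ⊆ U) {w : E} (hw : ‖w‖ ≤ r)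
    (hw₀ : w ≠ 0) : (c + w, c - w) ∈ distinctPairs U := by
  refine ⟨hU (by simpa [dist_eq_norm] using hw), hU (by simpa [dist_eq_norm] using hw), ?_⟩
  rw [Ne, sub_eq_add_neg, add_right_inj, eq_neg_iff_add_eq_zero, ← two_smul ℝ, smul_eq_zero]
  simpa using hw₀

theorem segment_subset_distinctPairs (hU : Convex ℝ U) {p q : E × E} (hp : p ∈ U ×ˢ U)
    (hq : q ∈ U ×ˢ U) (hpq : segment ℝ (p.1 - p.2) (q.1 - q.2) ⊆ {0}ᶜ) :
    segment ℝ p q ⊆ distinctPairs U := by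
  intro z hz
  obtain ⟨hz₁, hz₂⟩ := (hU.prod hU).segment_subset hp hq hz
  refine ⟨hz₁, hz₂, sub_ne_zero.1 (hpq ?_)⟩
  obtain ⟨a, b, ha, hb, hab, rfl⟩ := hz
  refine ⟨a, b, ha, hb, hab, ?_⟩
  simp only [Prod.fst_add, Prod.snd_add, Prod.smul_fst, Prod.smul_snd]
  module

def distinctPairs.sub : C(distinctPairs U, ({0}ᶜ : Set E)) :=
  ⟨fun p => ⟨p.1.1 - p.1.2, sub_ne_zero.2 p.2.2.2⟩, by fun_prop⟩

def distinctPairs.ofComplZero (hr : 0 < r) (hU : closedBall c r ⊆ U) :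
    C(({0}ᶜ : Set E), distinctPairs U) :=
  ⟨fun v => ⟨(c + (r * ‖(v : E)‖⁻¹) • (v : E), c - (r * ‖(v : E)‖⁻¹) • (v : E)),
    add_sub_mem_distinctPairs hU (by simp [norm_smul, abs_of_pos hr, norm_ne_zero_iff.2 v.2])
      (smul_ne_zero (mul_ne_zero hr.ne' (inv_ne_zero (norm_ne_zero_iff.2 v.2))) v.2)⟩, by
    have : Continuous fun v : ({0}ᶜ : Set E) => ‖(v : E)‖⁻¹ :=
      continuous_subtype_val.norm.inv₀ fun v => norm_ne_zero_iff.2 v.2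
    fun_prop⟩

theorem distinctPairs.sub_ofComplZero (hr : 0 < r) (hU : closedBall c r ⊆ U)
    (v : ({0}ᶜ : Set E)) :
    (sub (ofComplZero hr hU v) : E) = (2 * (r * ‖(v : E)‖⁻¹)) • (v : E) := by
  simp only [sub, ofComplZero, ContinuousMap.coe_mk]
  module

def distinctPairs.homotopyEquivComplZero (hU : Convex ℝ U) (hr : 0 < r)
    (hcU : closedBall c r ⊆ U) : distinctPairs U ≃ₕ ({0}ᶜ : Set E) where
  toFun := sub
  invFun := ofComplZero hr hcU
  left_inv := by
    refine ContinuousMap.homotopic_of_forall_segment_subset fun p =>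
      segment_subset_distinctPairs hU ?_ ⟨p.2.1, p.2.2.1⟩ ?_
    · exact ⟨(ofComplZero hr hcU (sub p)).2.1, (ofComplZero hr hcU (sub p)).2.2.1⟩
    · have h := segment_smul_self_subset_compl_zero (sub p).2
        (by have := norm_pos_iff.2 (sub p).2; positivity : 0 < 2 * (r * ‖(sub p : E)‖⁻¹))
      rwa [← sub_ofComplZero hr hcU] at h
  right_inv := by
    refine ContinuousMap.homotopic_of_forall_segment_subset fun v => ?_
    simp only [ContinuousMap.comp_apply, ContinuousMap.id_apply, sub_ofComplZero]
    exact segment_smul_self_subset_compl_zero v.2 (by have := norm_pos_iff.2 v.2; positivity)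

end DistinctPairs

theorem convex_ucfg (N : ℕ) : Convex ℝ (Ucfg N) := by
  rintro x ⟨hx₁, hx⟩ y ⟨hy₁, hy⟩ a b ha hb hab
  refine ⟨fun t => convex_Ioi (1 : ℝ) (hx₁ t) (hy₁ t) ha hb hab, fun s t hst => ?_⟩
  have := convex_Ioi (0 : ℝ) (sub_pos.2 (hx hst)) (sub_pos.2 (hy hst)) ha hb hab
  simp only [mem_Ioi, smul_eq_mul] at this
  simp only [Pi.add_apply, Pi.smul_apply, smul_eq_mul]
  linarith

theorem closedBall_subset_ucfg (N : ℕ) :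
    closedBall (fun t : Fin (N - 3) => (t : ℝ) + 2) (1 / 4) ⊆ Ucfg N := by
  intro x hx
  rw [mem_closedBall, dist_pi_le_iff (by norm_num)] at hx
  have h : ∀ t, |x t - ((t : ℝ) + 2)| ≤ 1 / 4 := fun t => by simpa [Real.dist_eq] using hx t
  refine ⟨fun t => ?_, fun s t hst => ?_⟩
  · linarith [(abs_le.1 (h t)).1, (t : ℕ).cast_nonneg (α := ℝ)]
  · have : (s : ℝ) + 1 ≤ t := by exact_mod_cast hst
    linarith [(abs_le.1 (h s)).2, (abs_le.1 (h t)).1]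

theorem adsPolyh_homotopyEquiv_sphere_general (N : ℕ) :
    Nonempty
      (ContinuousMap.HomotopyEquiv (AdSPolyh N)
        (Metric.sphere (0 : EuclideanSpace ℝ (Fin (N - 3))) 1)) ∧
    (6 ≤ N → PathConnectedSpace (AdSPolyh N) ∧ SimplyConnectedSpace (AdSPolyh N)) := by
  let e : AdSPolyh N ≃ₕ sphere (0 : EuclideanSpace ℝ (Fin (N - 3))) 1 :=
    ((distinctPairs.homotopyEquivComplZero (convex_ucfg N) (by norm_num)
      (closedBall_subset_ucfg N)).trans
      (EuclideanSpace.equiv (Fin (N - 3)) ℝ).symm.complZeroHomeomorph.toHomotopyEquiv).trans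
      (complZeroHomotopyEquivUnitSphere _)
  refine ⟨⟨e⟩, fun hN => ?_⟩
  have := simplyConnectedSpace_unitSphere (E := EuclideanSpace ℝ (Fin (N - 3)))
    (by rw [finrank_euclideanSpace_fin]; omega)
  have := e.simplyConnectedSpace
  exact ⟨inferInstance, this⟩

/-- **Topology of the space of AdS ideal polyhedra.** The space
`X = {(x, y) ∈ U × U : x ≠ y}` is homotopy equivalent to the unit sphere of `ℝ^{N−3}`
(a sphere of dimension `N−4`); in particular, for `N ≥ 6` it is path-connected and
simply connected. -/
theorem adsPolyh_homotopyEquiv_sphere (N : ℕ) (hN : 4 ≤ N) :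
    Nonempty
      (ContinuousMap.HomotopyEquiv (AdSPolyh N)
        (Metric.sphere (0 : EuclideanSpace ℝ (Fin (N - 3))) 1)) ∧
    (6 ≤ N → PathConnectedSpace (AdSPolyh N) ∧ SimplyConnectedSpace (AdSPolyh N)) :=
  adsPolyh_homotopyEquiv_sphere_general N

end
end

section
/- Let N ≥ 4 and let x, y : Fin N → ℝ each be injective. The following are equivalent: (a) for every four pairwise-distinct indices a, b, c, d, setting cr_x = ((x_d − x_b)·(x_c − x_a)) / ((x_d − x_a)·(x_c − x_b)) and cr_y = ((y_d − y_b)·(y_c − y_a)) / ((y_d − y_a)·(y_c − y_b)), one has cr_x·cr_y > 0 and (1 − cr_x)·(1 − cr_y) > 0 (i.e. cr_x and cr_y lie in the same connected component of ℝ ∖ {0,1}); (b) there exists a permutation π of Fin N such that x∘π is strictly increasing and for some k the cyclic sequence y_{π(k)}, y_{π(k+1)}, …, y_{π(k+N−1)} (indices taken mod N) is strictly monotone, i.e. the circular orders on {1,…,N} induced by x and by y agree up to rotation and reversal. (This is the cross-ratio/cyclic-order equivalence underlying the characterization of ideal polyhedra in anti-de Sitter space: four ideal points of ∂∞AdS³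 span an ideal simplex exactly when the shape parameter z satisfies |z|² = cr_x·cr_y > 0 and |1−z|² = (1−cr_x)(1−cr_y) > 0.) -/
noncomputable section

/-- The cross ratio `(z_a, z_b; z_c, z_d) = ((z_d − z_b)(z_c − z_a)) / ((z_d − z_a)(z_c − z_b))`,
the image of `z_d` under the Möbius transformation sending `z_a ↦ ∞`, `z_b ↦ 0`, `z_c ↦ 1`. -/
def crossRatio {α : Type*} (z : α → ℝ) (a b c d : α) : ℝ :=
  ((z d - z b) * (z c - z a)) / ((z d - z a) * (z c - z b))

/-!
The sign of `orient z a b c = (z a - z b) (z b - z c) (z c - z a)` is the orientation of the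
triple `(z a, z b, z c)` on the circle `ℝ ∪ {∞}`. Up to nonzero square factors,
`crossRatio z a b c d` is `orient z a b c * orient z a b d` and `1 - crossRatio z a b c d` is
`orient z a b c * orient z c a d`. So the cross ratios of `x` and `y` lie in the same component
of `ℝ ∖ {0, 1}` for all quadruples exactly when the relative orientation `orient x * orient y`
has the same sign on any two triples sharing two points. Any two triples are joined by a chain
of such triples, so `x` and `y` orient all triples alike, or (replacing `y` by `-y`) all
oppositely. Finally, after sorting the indices by `x`, a function that orients triples of
indices like the cyclic order of `Fin N` becomes increasing once rotated to start at its minimum.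
-/

open Function

theorem div_mul_div_pos_iff {K : Type*} [Field K] [LinearOrder K] [IsStrictOrderedRing K]
    {p q s t : K} (hs : 0 < s) (ht : 0 < t) : 0 < p / s * (q / t) ↔ 0 < p * q := by
  rw [div_mul_div_comm, div_pos_iff_of_pos_right (mul_pos hs ht)]

theorem mul_pos_of_pos_iff_pos {R : Type*} [Ring R] [LinearOrder R] [IsStrictOrderedRing R]
    {p q : R} (hp : p ≠ 0) (hq : q ≠ 0) (h : 0 < p ↔ 0 < q) : 0 < p * q := by
  rcases hp.lt_or_gt with hp' | hp'
  · exact mul_pos_of_neg_of_neg hp' ((not_lt.1 (mt h.2 hp'.not_gt)).lt_of_ne hq)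
  · exact mul_pos hp' (h.1 hp')

section Orientation

variable {α : Type*}

def orient (z : α → ℝ) (a b c : α) : ℝ :=
  (z a - z b) * (z b - z c) * (z c - z a)

variable {z : α → ℝ} {a b c d : α}

theorem orient_rotate : orient z b c a = orient z a b c := by
  simp only [orient]; ring

theorem orient_swap_right : orient z a c b = -orient z a b c := by
  simp only [orient]; ring

theorem orient_neg : orient (-z) a b c = -orient z a b c := by
  simp only [orient, Pi.neg_apply]; ring

theorem orient_ne_zero (hz : Injective z) (hab : a ≠ b) (hbc : b ≠ c) (hca : c ≠ a) :
    orient z a b c ≠ 0 := by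
  simp only [orient, ne_eq, mul_eq_zero, sub_eq_zero, not_or]
  exact ⟨⟨hz.ne hab, hz.ne hbc⟩, hz.ne hca⟩

theorem orient_pos_of_lt_of_lt (hab : z a < z b) (hbc : z b < z c) : 0 < orient z a b c :=
  mul_pos (mul_pos_of_neg_of_neg (sub_neg.2 hab) (sub_neg.2 hbc)) (sub_pos.2 (hab.trans hbc))

theorem orient_nonpos_of_le_of_le (hcb : z c ≤ z b) (hba : z b ≤ z a) : orient z a b c ≤ 0 :=
  mul_nonpos_of_nonneg_of_nonpos (mul_nonneg (sub_nonneg.2 hba) (sub_nonneg.2 hcb))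
    (sub_nonpos.2 (hcb.trans hba))

theorem orient_pos_iff_of_lt_of_lt (hab : z a < z b) (hac : z a < z c) :
    0 < orient z a b c ↔ z b < z c := by
  rw [show orient z a b c = (z b - z a) * (z c - z a) * (z c - z b) by simp only [orient]; ring,
    mul_pos_iff_of_pos_left (mul_pos (sub_pos.2 hab) (sub_pos.2 hac)), sub_pos]

theorem crossRatio_eq_orient_mul_orient (hab : z a ≠ z b) (hcb : z c ≠ z b) (hda : z d ≠ z a) :
    crossRatio z a b c d =
      orient z a b c * orient z a b d / ((z a - z b) * (z c - z b) * (z d - z a)) ^ 2 := by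
  rw [crossRatio, orient, orient, eq_div_iff (pow_ne_zero 2 (by simp [sub_eq_zero, *]))]
  field_simp [sub_ne_zero.2 hcb, sub_ne_zero.2 hda]
  ring

theorem one_sub_crossRatio_eq_orient_mul_orient (hca : z c ≠ z a) (hcb : z c ≠ z b)
    (hda : z d ≠ z a) :
    1 - crossRatio z a b c d =
      orient z a b c * orient z c a d / ((z c - z a) * (z c - z b) * (z d - z a)) ^ 2 := by
  rw [crossRatio, orient, orient, eq_div_iff (pow_ne_zero 2 (by simp [sub_eq_zero, *]))]
  field_simp [sub_ne_zero.2 hcb, sub_ne_zero.2 hda]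
  ring

theorem crossRatio_neg : crossRatio (-z) a b c d = crossRatio z a b c d := by
  simp only [crossRatio, Pi.neg_apply]; ring

end Orientation

section Triples

variable {α : Type*} {P : α → α → α → Prop}

theorem iff_of_forall_replace_of_eq_first (hswap : ∀ a b c, P a c b ↔ P a b c)
    (hrepl : ∀ a b c d, a ≠ b → a ≠ c → a ≠ d → b ≠ c → b ≠ d → c ≠ d → (P a b c ↔ P a b d))
    {a b c b' c' : α} (hb : b ≠ a) (hc : c ≠ a) (hbc : b ≠ c) (hb' : b' ≠ a) (hc' : c' ≠ a)
    (hbc' : b' ≠ c') : P a b c ↔ P a b' c' := by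
  have hrepl' : ∀ {u v w}, u ≠ a → v ≠ a → w ≠ a → u ≠ v → u ≠ w → (P a u v ↔ P a u w) := by
    intro u v w hu hv hw huv huw
    rcases eq_or_ne v w with rfl | hvw
    · rfl
    · exact hrepl a u v w hu.symm hv.symm hw.symm huv huw hvw
  rcases eq_or_ne c' b with rfl | hc'b
  · exact (hrepl' hc' hc hb' hbc hbc'.symm).trans (hswap a b' c')
  · calc P a b c ↔ P a b c' := hrepl' hb hc hc' hbc hc'b.symm
      _ ↔ P a c' b := hswap a c' b
      _ ↔ P a c' b' := hrepl' hc' hb hb' hc'b hbc'.symm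
      _ ↔ P a b' c' := hswap a b' c'

theorem iff_of_forall_replace (hrot : ∀ a b c, P b c a ↔ P a b c)
    (hswap : ∀ a b c, P a c b ↔ P a b c)
    (hrepl : ∀ a b c d, a ≠ b → a ≠ c → a ≠ d → b ≠ c → b ≠ d → c ≠ d → (P a b c ↔ P a b d))
    {a b c a' b' c' : α} (hab : a ≠ b) (hbc : b ≠ c) (hca : c ≠ a) (hab' : a' ≠ b')
    (hbc' : b' ≠ c') (hca' : c' ≠ a') : P a b c ↔ P a' b' c' := by
  have hfirst : ∀ {u v}, u ≠ a → v ≠ a → u ≠ v → (P a b c ↔ P a u v) :=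
    iff_of_forall_replace_of_eq_first hswap hrepl hab.symm hca hbc
  rcases eq_or_ne a' a with rfl | ha'
  · exact hfirst hab'.symm hca' hbc'
  rcases eq_or_ne b' a with rfl | hb'
  · exact (hfirst hbc'.symm ha' hca').trans (hrot a' b' c')
  rcases eq_or_ne c' a with rfl | hc'
  · exact (hfirst ha' hb' hab').trans (hrot c' a' b').symm
  calc P a b c ↔ P a b' c' := hfirst hb' hc' hbc'
    _ ↔ P b' c' a := (hrot a b' c').symm
    _ ↔ P b' c' a' := hrepl b' c' a a' hbc' hb' hab'.symm hc' hca' ha'.symm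
    _ ↔ P a' b' c' := hrot a' b' c'

end Triples

section Components

variable {α : Type*}

def SameCrossRatioComponents (x y : α → ℝ) : Prop :=
  ∀ a b c d : α, a ≠ b → a ≠ c → a ≠ d → b ≠ c → b ≠ d → c ≠ d →
    0 < crossRatio x a b c d * crossRatio y a b c d ∧
    0 < (1 - crossRatio x a b c d) * (1 - crossRatio y a b c d)

def SameOrientation (x y : α → ℝ) : Prop :=
  ∀ a b c : α, a ≠ b → b ≠ c → c ≠ a → 0 < orient x a b c * orient y a b c

variable {x y : α → ℝ} {a b c d : α}

theorem sameComponents_iff_orient (hx : Injective x) (hy : Injective y) (hab : a ≠ b)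
    (hac : a ≠ c) (had : a ≠ d) (hbc : b ≠ c) :
    (0 < crossRatio x a b c d * crossRatio y a b c d ∧
        0 < (1 - crossRatio x a b c d) * (1 - crossRatio y a b c d)) ↔
      0 < orient x a b c * orient y a b c * (orient x a b d * orient y a b d) ∧
        0 < orient x a b c * orient y a b c * (orient x c a d * orient y c a d) := by
  rw [one_sub_crossRatio_eq_orient_mul_orient (hx.ne hac.symm) (hx.ne hbc.symm) (hx.ne had.symm),
    one_sub_crossRatio_eq_orient_mul_orient (hy.ne hac.symm) (hy.ne hbc.symm) (hy.ne had.symm),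
    crossRatio_eq_orient_mul_orient (hx.ne hab) (hx.ne hbc.symm) (hx.ne had.symm),
    crossRatio_eq_orient_mul_orient (hy.ne hab) (hy.ne hbc.symm) (hy.ne had.symm),
    div_mul_div_pos_iff, div_mul_div_pos_iff, mul_mul_mul_comm (orient x a b c) (orient x a b d),
    mul_mul_mul_comm (orient x a b c) (orient x c a d)]
  all_goals exact sq_pos_of_ne_zero (by simp [sub_eq_zero, hx.eq_iff, hy.eq_iff, hab, hac.symm,
    had.symm, hbc.symm])

theorem SameOrientation.sameCrossRatioComponents (hx : Injective x) (hy : Injective y)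
    (h : SameOrientation x y) : SameCrossRatioComponents x y := by
  intro a b c d hab hac had hbc hbd hcd
  rw [sameComponents_iff_orient hx hy hab hac had hbc]
  exact ⟨mul_pos (h a b c hab hbc hac.symm) (h a b d hab hbd had.symm),
    mul_pos (h a b c hab hbc hac.symm) (h c a d hac.symm had hcd.symm)⟩

theorem sameCrossRatioComponents_neg_right :
    SameCrossRatioComponents x (-y) ↔ SameCrossRatioComponents x y := by
  simp only [SameCrossRatioComponents, crossRatio_neg]

theorem SameCrossRatioComponents.sameOrientation_or_neg (hx : Injective x) (hy : Injective y)
    (h : SameCrossRatioComponents x y) : SameOrientation x y ∨ SameOrientation x (-y) := by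
  set P : α → α → α → Prop := fun a b c => 0 < orient x a b c * orient y a b c
  have hrot : ∀ a b c, P b c a ↔ P a b c := by
    intro a b c; simp only [P, orient_rotate]
  have hswap : ∀ a b c, P a c b ↔ P a b c := by
    intro a b c
    simp only [P]
    rw [orient_swap_right (z := x), orient_swap_right (z := y), neg_mul_neg]
  have hrepl : ∀ a b c d, a ≠ b → a ≠ c → a ≠ d → b ≠ c → b ≠ d → c ≠ d → (P a b c ↔ P a b d) :=
    fun a b c d hab hac had hbc hbd hcd => pos_iff_pos_of_mul_pos
      ((sameComponents_iff_orient hx hy hab hac had hbc).1 (h a b c d hab hac had hbc hbd hcd)).1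
  by_cases hxy : SameOrientation x y
  · exact .inl hxy
  obtain ⟨a₀, b₀, c₀, hab₀, hbc₀, hca₀, hP₀⟩ : ∃ a b c, a ≠ b ∧ b ≠ c ∧ c ≠ a ∧ ¬P a b c := by
    simpa [SameOrientation, P] using hxy
  refine .inr fun a b c hab hbc hca => ?_
  have hP : ¬P a b c := fun hP ↦
    hP₀ ((iff_of_forall_replace hrot hswap hrepl hab hbc hca hab₀ hbc₀ hca₀).1 hP)
  rw [orient_neg, mul_neg, neg_pos]
  exact (not_lt.1 hP).lt_of_ne
    (mul_ne_zero (orient_ne_zero hx hab hbc hca) (orient_ne_zero hy hab hbc hca))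

theorem sameOrientation_comp_equiv_iff {β : Type*} (e : β ≃ α) :
    SameOrientation (x ∘ e) (y ∘ e) ↔ SameOrientation x y := by
  refine ⟨fun h a b c hab hbc hca => ?_, fun h a b c hab hbc hca => ?_⟩
  · simpa [orient] using h (e.symm a) (e.symm b) (e.symm c) (by simpa) (by simpa) (by simpa)
  · exact h (e a) (e b) (e c) (e.injective.ne hab) (e.injective.ne hbc) (e.injective.ne hca)

end Components

section Fin

variable {N : ℕ}

theorem Fin.sbtw_add_iff_left (k a b c : Fin N) : sbtw (k + a) (k + b) (k + c) ↔ sbtw a b c := by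
  simp only [Fin.sbtw_iff, Fin.lt_def, Fin.val_add_eq_ite]
  split_ifs <;> omega

theorem StrictMono.orient_pos_iff_sbtw {f : Fin N → ℝ} (hf : StrictMono f) {a b c : Fin N} :
    0 < orient f a b c ↔ sbtw a b c := by
  constructor
  · intro h
    by_contra hs
    rcases Fin.btw_iff.1 (btw_iff_not_sbtw.2 hs) with ⟨hcb, hba⟩ | ⟨hba, hac⟩ | ⟨hac, hcb⟩
    · exact (orient_nonpos_of_le_of_le (hf.monotone hcb) (hf.monotone hba)).not_gt h
    · rw [← orient_rotate, ← orient_rotate] at h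
      exact (orient_nonpos_of_le_of_le (hf.monotone hba) (hf.monotone hac)).not_gt h
    · rw [← orient_rotate] at h
      exact (orient_nonpos_of_le_of_le (hf.monotone hac) (hf.monotone hcb)).not_gt h
  · rintro (⟨hab, hbc⟩ | ⟨hbc, hca⟩ | ⟨hca, hab⟩)
    · exact orient_pos_of_lt_of_lt (hf hab) (hf hbc)
    · rw [← orient_rotate]
      exact orient_pos_of_lt_of_lt (hf hbc) (hf hca)
    · rw [← orient_rotate, ← orient_rotate]
      exact orient_pos_of_lt_of_lt (hf hca) (hf hab)

variable [NeZero N]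

theorem StrictMono.sameOrientation_iff {f g : Fin N → ℝ} (hf : StrictMono f) (hg : Injective g) :
    SameOrientation f g ↔ ∃ k, StrictMono fun j => g (k + j) := by
  constructor
  · intro h
    obtain ⟨k, hk⟩ := Finite.exists_min g
    have hmin : ∀ {j}, j ≠ 0 → g k < g (k + j) := fun hj =>
      (hk _).lt_of_ne (hg.ne (by simpa using hj))
    refine ⟨k, fun i j hij => ?_⟩
    rcases eq_or_ne i 0 with rfl | hi
    · simpa using hmin hij.ne'
    have hs : sbtw k (k + i) (k + j) := by
      simpa using (Fin.sbtw_add_iff_left k 0 i j).2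
        (Fin.sbtw_iff.2 (.inl ⟨pos_iff_ne_zero.2 hi, hij⟩))
    have hj : j ≠ 0 := ((pos_iff_ne_zero.2 hi).trans hij).ne'
    have hpos := h k (k + i) (k + j) (by simpa using hi) (by simpa using hij.ne) (by simpa using hj)
    exact (orient_pos_iff_of_lt_of_lt (hmin hi) (hmin hj)).1
      ((pos_iff_pos_of_mul_pos hpos).1 (hf.orient_pos_iff_sbtw.2 hs))
  · rintro ⟨k, hk⟩ a b c hab hbc hca
    have hgk : 0 < orient g a b c ↔ sbtw a b c := by
      have h := hk.orient_pos_iff_sbtw (a := a - k) (b := b - k) (c := c - k)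
      rwa [← Fin.sbtw_add_iff_left k, orient, add_sub_cancel, add_sub_cancel, add_sub_cancel] at h
    exact mul_pos_of_pos_iff_pos (orient_ne_zero hf.injective hab hbc hca)
      (orient_ne_zero hg hab hbc hca) (hf.orient_pos_iff_sbtw.trans hgk.symm)

theorem sameOrientation_iff_of_strictMono_comp {x z : Fin N → ℝ} {π : Equiv.Perm (Fin N)}
    (hπ : StrictMono (x ∘ π)) (hz : Injective z) :
    SameOrientation x z ↔ ∃ k, StrictMono fun j => z (π (k + j)) :=
  (sameOrientation_comp_equiv_iff π).symm.trans (hπ.sameOrientation_iff (hz.comp π.injective))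

end Fin

/-- **Cross-ratio / cyclic-order equivalence.** For injective `x, y : Fin N → ℝ` (`N ≥ 4`),
the cross ratios of `x` and of `y` on every four pairwise-distinct indices lie in the same
connected component of `ℝ ∖ {0,1}` (i.e. `cr_x·cr_y > 0` and `(1 − cr_x)(1 − cr_y) > 0`)
if and only if the circular orders induced on the indices by `x` and by `y` agree up to
rotation and reversal: some permutation `π` makes `x ∘ π` strictly increasing while the
cyclic sequence `y_{π(k)}, y_{π(k+1)}, …, y_{π(k+N−1)}` is strictly monotone for some `k`. -/
theorem crossRatio_component_iff_cyclic_order (N : ℕ) (hN : 4 ≤ N)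
    (x y : Fin N → ℝ) (hx : Function.Injective x) (hy : Function.Injective y) :
    (∀ a b c d : Fin N, a ≠ b → a ≠ c → a ≠ d → b ≠ c → b ≠ d → c ≠ d →
        0 < crossRatio x a b c d * crossRatio y a b c d ∧
        0 < (1 - crossRatio x a b c d) * (1 - crossRatio y a b c d))
      ↔ (∃ π : Equiv.Perm (Fin N), StrictMono (x ∘ π) ∧
          ∃ k : Fin N,
            (StrictMono fun j : Fin N => y (π (k + j))) ∨
            (StrictAnti fun j : Fin N => y (π (k + j)))) := by
  have : NeZero N := ⟨by omega⟩
  have hy' : Injective (-y) := neg_injective.comp hy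
  change SameCrossRatioComponents x y ↔ _
  constructor
  · intro h
    have hsort : StrictMono (x ∘ Tuple.sort x) :=
      (Tuple.monotone_sort x).strictMono_of_injective (hx.comp (Tuple.sort x).injective)
    refine ⟨Tuple.sort x, hsort, ?_⟩
    rcases h.sameOrientation_or_neg hx hy with h | h
    · obtain ⟨k, hk⟩ := (sameOrientation_iff_of_strictMono_comp hsort hy).1 h
      exact ⟨k, .inl hk⟩
    · obtain ⟨k, hk⟩ := (sameOrientation_iff_of_strictMono_comp hsort hy').1 h
      exact ⟨k, .inr fun i j hij => neg_lt_neg_iff.1 (hk hij)⟩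
  · rintro ⟨π, hπ, k, hk | hk⟩
    · exact ((sameOrientation_iff_of_strictMono_comp hπ hy).2 ⟨k, hk⟩).sameCrossRatioComponents
        hx hy
    · rw [← sameCrossRatioComponents_neg_right]
      exact ((sameOrientation_iff_of_strictMono_comp hπ hy').2
        ⟨k, fun i j hij => neg_lt_neg (hk hij)⟩).sameCrossRatioComponents hx hy'
end
end
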